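/- arXiv:1105.4918 — 7 statements merged into one kernel-verified Lean document; each statement's English description precedes it below -/
import Mathlib

section
/- Suppose M > 0, L ≥ max(0.62, 0.15*M), r ≥ 1 with r ≥ sup_{y∈[0,1]} |Q*s(y)|, 0 < t < 1/(B+C), and 0 < ε ≤ B/(2*(L*r + L + r)). Set δ₁ = L*ε/(1 - (L+r)*ε), δ₂ = L*r*ε/(1 - (L+r)*ε), and ρ = (1 - t*B) + t*((1 - t*B)*δ₁ + δ₂). Then ρ < 1, and if Φ* is an r-admissible fixed point of the graph transform in G_L and (Φₙ) is a sequence of r-admissible graphs in G_L such that Φₙ₊₁ is a graph-transform image of Φₙ for every n, then sup_{η∈ℝ} ‖Φₙ(η) - Φ*(η)‖_∞ ≤ ρ^n * sup_{η∈ℝ} ‖Φ₀(η) - Φ*(η)‖_∞ for all n; in particular the distance to Φ* decreases exponentially. -/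
noncomputable section

open scoped BoundedContinuousFunction

namespace Budyko

/-- Solar constant (W/m²). -/
def Q : ℝ := 343
/-- OLR constant A (W/m²). -/
def A : ℝ := 202
/-- OLR constant B (W/m²/°C). -/
def B : ℝ := 1.9
/-- Transport constant C (W/m²/°C). -/
def C : ℝ := 3.04
/-- Critical temperature (°C). -/
def Tc : ℝ := -10

/-- Insolation distribution. -/
def s (y : ℝ) : ℝ := 1 - 0.241 * (3 * y ^ 2 - 1)

/-- Clamp to `[0,1]`. -/
def clamp (y : ℝ) : ℝ := min (max y 0) 1

/-- Insolation extended to the real line. -/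
def sTilde (y : ℝ) : ℝ := s (clamp y)

/-- Iceline-dependent smooth albedo with steepness `M`. -/
def albedo (M η y : ℝ) : ℝ := 0.47 + 0.15 * Real.tanh (M * (clamp y - η))

/-- The Budyko vector field `F(T,η)(y)`. -/
def F (M : ℝ) (T : ℝ →ᵇ ℝ) (η y : ℝ) : ℝ :=
  Q * sTilde y * (1 - albedo M η y) - (B + C) * T y - A + C * ∫ u in (0:ℝ)..1, T u

/-- `g(η) = ∫₀¹ Q s(y) (1 - a(η)(y)) dy`. -/
def g (M η : ℝ) : ℝ := ∫ y in (0:ℝ)..1, Q * s y * (1 - albedo M η y)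

/-- The local equilibrium temperature profile `T*(η)(y)`. -/
def Tstar (M η y : ℝ) : ℝ :=
  (Q * sTilde y * (1 - albedo M η y) - A + (C / B) * (g M η - A)) / (B + C)

/-- Membership in the class `G_L` of Lipschitz graphs. -/
def MemGL (L : ℝ) (Φ : ℝ → ℝ →ᵇ ℝ) : Prop :=
  ∀ ζ η : ℝ, ‖Φ ζ - Φ η‖ ≤ L * |ζ - η|

/-- A graph is `r`-admissible if `‖Φ‖_G ≤ r` and every `Φ(η)` is `r`-Lipschitz. -/
def Admissible (r : ℝ) (Φ : ℝ → ℝ →ᵇ ℝ) : Prop :=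
  (∀ η : ℝ, ‖Φ η‖ ≤ r) ∧ ∀ η x z : ℝ, |Φ η x - Φ η z| ≤ r * |x - z|

/-- `Ψ` is a graph-transform image of `Φ` (time step `t`, slow parameter `ε`). -/
def IsGTImage (M t ε : ℝ) (Φ Ψ : ℝ → ℝ →ᵇ ℝ) : Prop :=
  ∀ η ξ : ℝ, η = ξ + ε * t * (Φ ξ ξ - Tc) → ∀ y : ℝ, Ψ η y = Φ ξ y + t * F M (Φ ξ) ξ y

/-- `Φ` is a fixed point of the Budyko graph transform. -/
def IsGTFixed (M t ε : ℝ) (Φ : ℝ → ℝ →ᵇ ℝ) : Prop := IsGTImage M t ε Φ Φ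

/-!
Given `η`, choose `ξ` with `η = ξ + εt(Φ(ξ)(ξ) - T_c)`; such a `ξ` exists because this is a
bounded continuous perturbation of the identity in `ξ`. With `D = Φ(ξ) - Φ*(ξ)` and
`η' = ξ + εt(Φ*(ξ)(ξ) - T_c)`, the difference `Ψ(η) - Φ*(η)` is the difference of two Euler steps
of `F` at the same iceline `ξ`, which is at most `(1 - tB)‖D‖` (the transport term only averages
`D`), plus `Φ*(η') - Φ*(η)`, bounded by `L|η' - η| = Lεt|D(ξ)|`. Hence each step contracts the
sup distance to `Φ*` by `1 - tB + Lεt ≤ ρ`, and `ρ < 1` is arithmetic in the constraint on `ε`.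
-/

lemma abs_apply_le_norm {α : Type*} [TopologicalSpace α] (f : α →ᵇ ℝ) (x : α) : |f x| ≤ ‖f‖ := by
  simpa only [Real.norm_eq_abs] using f.norm_coe_le_norm x

lemma abs_integral_zero_one_le_norm (f : ℝ →ᵇ ℝ) : |∫ u in (0:ℝ)..1, f u| ≤ ‖f‖ := by
  simpa using intervalIntegral.norm_integral_le_of_norm_le_const (a := 0) (b := 1)
    fun x _ => f.norm_coe_le_norm x

lemma surjective_add_of_abs_le {h : ℝ → ℝ} {c : ℝ} (hh : Continuous h) (hc : ∀ x, |h x| ≤ c) :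
    Function.Surjective fun x => x + h x := by
  have hsymm : (fun x => x + h x) = fun x => h x + x := funext fun x => add_comm _ _
  rw [hsymm]
  exact (hh.add continuous_id).surjective
    (Filter.tendsto_atTop_add_left_of_le _ (-c) (fun x => (abs_le.mp (hc x)).1) Filter.tendsto_id)
    (Filter.tendsto_atBot_add_left_of_ge _ c (fun x => (abs_le.mp (hc x)).2) Filter.tendsto_id)

lemma MemGL.continuous {L : ℝ} {Φ : ℝ → ℝ →ᵇ ℝ} (hΦ : MemGL L Φ) : Continuous Φ :=
  LipschitzWith.continuous (K := L.toNNReal) <| LipschitzWith.of_dist_le_mul fun ζ η => by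
    rw [dist_eq_norm, Real.dist_eq]
    exact (hΦ ζ η).trans (mul_le_mul_of_nonneg_right (Real.le_coe_toNNReal L) (abs_nonneg _))

lemma MemGL.exists_eq_iceline_step {L r t ε : ℝ} {Φ : ℝ → ℝ →ᵇ ℝ} (hΦ : MemGL L Φ)
    (hbdd : ∀ ξ, ‖Φ ξ‖ ≤ r) (η : ℝ) : ∃ ξ, η = ξ + ε * t * (Φ ξ ξ - Tc) := by
  have hstep : ∀ ξ, |ε * t * (Φ ξ ξ - Tc)| ≤ |ε * t| * (r + 10) := fun ξ => by
    rw [abs_mul]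
    refine mul_le_mul_of_nonneg_left ?_ (abs_nonneg _)
    calc |Φ ξ ξ - Tc| ≤ |Φ ξ ξ| + |Tc| := abs_sub _ _
      _ ≤ r + 10 := by
        rw [show |Tc| = 10 by norm_num [Tc]]
        linarith [(abs_apply_le_norm (Φ ξ) ξ).trans (hbdd ξ)]
  have hcont : Continuous fun ξ => ε * t * (Φ ξ ξ - Tc) :=
    continuous_const.mul ((hΦ.continuous.eval continuous_id).sub continuous_const)
  obtain ⟨ξ, hξ⟩ := surjective_add_of_abs_le hcont hstep η
  exact ⟨ξ, hξ.symm⟩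

lemma F_sub_F (M : ℝ) (T T' : ℝ →ᵇ ℝ) (η y : ℝ) :
    F M T η y - F M T' η y = -(B + C) * (T - T') y + C * ∫ u in (0:ℝ)..1, (T - T') u := by
  have hint : ∫ u in (0:ℝ)..1, (T - T') u =
      (∫ u in (0:ℝ)..1, T u) - ∫ u in (0:ℝ)..1, T' u :=
    intervalIntegral.integral_sub (T.continuous.intervalIntegrable _ _)
      (T'.continuous.intervalIntegrable _ _)
  rw [hint, BoundedContinuousFunction.sub_apply, F, F]
  ring

lemma abs_eulerStep_sub_le {M t : ℝ} (ht0 : 0 ≤ t) (htBC : t * (B + C) ≤ 1)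
    (T T' : ℝ →ᵇ ℝ) (η y : ℝ) :
    |(T y + t * F M T η y) - (T' y + t * F M T' η y)| ≤ (1 - t * B) * ‖T - T'‖ := by
  have htC : 0 ≤ t * C := mul_nonneg ht0 (by norm_num [C])
  have hsplit : (T y + t * F M T η y) - (T' y + t * F M T' η y) =
      (1 - t * (B + C)) * (T - T') y + t * C * ∫ u in (0:ℝ)..1, (T - T') u := by
    have := F_sub_F M T T' η y
    rw [BoundedContinuousFunction.sub_apply] at this ⊢
    linear_combination t * this
  calc _ ≤ (1 - t * (B + C)) * ‖T - T'‖ + t * C * ‖T - T'‖ := by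
        rw [hsplit]
        refine (abs_add_le _ _).trans (add_le_add ?_ ?_) <;>
          rw [abs_mul, abs_of_nonneg (by linarith)]
        · exact mul_le_mul_of_nonneg_left (abs_apply_le_norm _ _) (by linarith)
        · exact mul_le_mul_of_nonneg_left (abs_integral_zero_one_le_norm _) htC
    _ = (1 - t * B) * ‖T - T'‖ := by ring

lemma contraction_nonneg {L t ε : ℝ} (ht0 : 0 ≤ t) (htBC : t * (B + C) ≤ 1) (hε : 0 ≤ ε)
    (hL : 0 ≤ L) : 0 ≤ 1 - t * B + L * ε * t := by
  have : t * B ≤ 1 := by nlinarith [show (0:ℝ) ≤ C by norm_num [C]]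
  nlinarith [mul_nonneg (mul_nonneg hL hε) ht0]

lemma IsGTImage.exists_norm_sub_le {M L r t ε : ℝ} (ht0 : 0 ≤ t) (htBC : t * (B + C) ≤ 1)
    (hε : 0 ≤ ε) (hL : 0 ≤ L) {Φ Ψ Φs : ℝ → ℝ →ᵇ ℝ} (hΦ : MemGL L Φ) (hbdd : ∀ ξ, ‖Φ ξ‖ ≤ r)
    (hΦs : MemGL L Φs) (hΨ : IsGTImage M t ε Φ Ψ) (hfix : IsGTFixed M t ε Φs) (η : ℝ) :
    ∃ ξ, ‖Ψ η - Φs η‖ ≤ (1 - t * B + L * ε * t) * ‖Φ ξ - Φs ξ‖ := by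
  obtain ⟨ξ, hξ⟩ := hΦ.exists_eq_iceline_step (t := t) (ε := ε) hbdd η
  set η' := ξ + ε * t * (Φs ξ ξ - Tc)
  have hshift : |η' - η| ≤ ε * t * ‖Φ ξ - Φs ξ‖ := by
    have : η' - η = ε * t * -(Φ ξ - Φs ξ) ξ := by
      rw [hξ, BoundedContinuousFunction.sub_apply]
      ring
    rw [this, abs_mul, abs_neg, abs_of_nonneg (by positivity)]
    exact mul_le_mul_of_nonneg_left (abs_apply_le_norm _ _) (by positivity)
  have hκ := contraction_nonneg ht0 htBC hε hL
  refine ⟨ξ, (BoundedContinuousFunction.norm_le (by positivity)).2 fun y => ?_⟩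
  have hdecomp : (Ψ η - Φs η) y = ((Φ ξ y + t * F M (Φ ξ) ξ y) - (Φs ξ y + t * F M (Φs ξ) ξ y))
      + (Φs η' - Φs η) y := by
    rw [BoundedContinuousFunction.sub_apply, BoundedContinuousFunction.sub_apply,
      hΨ η ξ hξ y, hfix η' ξ rfl y]
    ring
  rw [Real.norm_eq_abs, hdecomp]
  have hfixed_shift : |(Φs η' - Φs η) y| ≤ L * ε * t * ‖Φ ξ - Φs ξ‖ :=
    calc _ ≤ ‖Φs η' - Φs η‖ := abs_apply_le_norm _ _
      _ ≤ L * |η' - η| := hΦs η' η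
      _ ≤ L * (ε * t * ‖Φ ξ - Φs ξ‖) := mul_le_mul_of_nonneg_left hshift hL
      _ = L * ε * t * ‖Φ ξ - Φs ξ‖ := by ring
  calc _ ≤ (1 - t * B) * ‖Φ ξ - Φs ξ‖ + L * ε * t * ‖Φ ξ - Φs ξ‖ :=
        (abs_add_le _ _).trans (add_le_add (abs_eulerStep_sub_le ht0 htBC _ _ _ _) hfixed_shift)
    _ = (1 - t * B + L * ε * t) * ‖Φ ξ - Φs ξ‖ := by ring

def graphDist (Φ Ψ : ℝ → ℝ →ᵇ ℝ) : ℝ := ⨆ η, ‖Φ η - Ψ η‖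

lemma graphDist_nonneg (Φ Ψ : ℝ → ℝ →ᵇ ℝ) : 0 ≤ graphDist Φ Ψ :=
  Real.iSup_nonneg fun _ => norm_nonneg _

lemma norm_sub_le_graphDist {r : ℝ} {Φ Ψ : ℝ → ℝ →ᵇ ℝ} (hΦ : ∀ η, ‖Φ η‖ ≤ r)
    (hΨ : ∀ η, ‖Ψ η‖ ≤ r) (η : ℝ) : ‖Φ η - Ψ η‖ ≤ graphDist Φ Ψ :=
  le_ciSup ⟨r + r, by
    rintro _ ⟨ζ, rfl⟩
    exact (norm_sub_le _ _).trans (add_le_add (hΦ ζ) (hΨ ζ))⟩ η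

lemma IsGTImage.graphDist_le {M L r t ε : ℝ} (ht0 : 0 ≤ t) (htBC : t * (B + C) ≤ 1)
    (hε : 0 ≤ ε) (hL : 0 ≤ L) {Φ Ψ Φs : ℝ → ℝ →ᵇ ℝ} (hΦ : MemGL L Φ) (hbdd : ∀ ξ, ‖Φ ξ‖ ≤ r)
    (hΦs : MemGL L Φs) (hbdds : ∀ ξ, ‖Φs ξ‖ ≤ r) (hΨ : IsGTImage M t ε Φ Ψ)
    (hfix : IsGTFixed M t ε Φs) :
    graphDist Ψ Φs ≤ (1 - t * B + L * ε * t) * graphDist Φ Φs :=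
  ciSup_le fun η => by
    obtain ⟨ξ, hξ⟩ := hΨ.exists_norm_sub_le ht0 htBC hε hL hΦ hbdd hΦs hfix η
    exact hξ.trans (mul_le_mul_of_nonneg_left (norm_sub_le_graphDist hbdd hbdds ξ)
      (contraction_nonneg ht0 htBC hε hL))

lemma add_mul_lt_one {L r ε : ℝ} (hL : 0 ≤ L) (hr : 1 ≤ r) (hε0 : 0 < ε)
    (hε1 : ε ≤ B / (2 * (L * r + L + r))) : (L + r) * ε < 1 := by
  have hpos : 0 < 2 * (L * r + L + r) := by nlinarith
  rw [le_div_iff₀ hpos] at hε1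
  nlinarith [mul_nonneg (mul_nonneg hL (by linarith : (0:ℝ) ≤ r)) hε0.le, show B = 1.9 from rfl]

lemma le_rate {L r t ε δ₁ δ₂ ρ : ℝ} (hL : 0 ≤ L) (hr : 1 ≤ r) (ht0 : 0 ≤ t)
    (htB : t * B ≤ 1) (hε0 : 0 ≤ ε) (hden : (L + r) * ε < 1)
    (hδ₁ : δ₁ = L * ε / (1 - (L + r) * ε)) (hδ₂ : δ₂ = L * r * ε / (1 - (L + r) * ε))
    (hρ : ρ = (1 - t * B) + t * ((1 - t * B) * δ₁ + δ₂)) :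
    1 - t * B + L * ε * t ≤ ρ := by
  have hpos : 0 < 1 - (L + r) * ε := by linarith
  have hδ₁0 : 0 ≤ δ₁ := hδ₁ ▸ by positivity
  have hδ₂ : δ₂ = r * δ₁ := by rw [hδ₁, hδ₂]; field_simp
  have hLε : L * ε ≤ δ₁ := by
    rw [hδ₁, le_div_iff₀ hpos]
    nlinarith [mul_nonneg (mul_nonneg hL hε0) (by positivity : 0 ≤ (L + r) * ε)]
  rw [hρ, hδ₂]
  nlinarith [mul_nonneg ht0 (sub_nonneg.mpr hLε),
    mul_nonneg (mul_nonneg ht0 (by linarith : 0 ≤ 1 - t * B + r - 1)) hδ₁0]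

lemma rate_lt_one {L r t ε δ₁ δ₂ ρ : ℝ} (hL : 0 ≤ L) (hr : 1 ≤ r) (ht0 : 0 < t) (hε0 : 0 < ε)
    (hε1 : ε ≤ B / (2 * (L * r + L + r)))
    (hδ₁ : δ₁ = L * ε / (1 - (L + r) * ε)) (hδ₂ : δ₂ = L * r * ε / (1 - (L + r) * ε))
    (hρ : ρ = (1 - t * B) + t * ((1 - t * B) * δ₁ + δ₂)) : ρ < 1 := by
  have hpos : 0 < 1 - (L + r) * ε := by linarith [add_mul_lt_one hL hr hε0 hε1]
  have hδ₁0 : 0 ≤ δ₁ := hδ₁ ▸ by positivity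
  -- `δ₁ + δ₂ < B` iff `(L + Lr + BL + Br) ε < B`, and `2 (Lr + L + r)` exceeds this coefficient
  -- by `L (r - 0.9) + 0.1 r > 0`.
  have hδ_sum : δ₁ + δ₂ < B := by
    rw [hδ₁, hδ₂, ← add_div, div_lt_iff₀ hpos]
    rw [le_div_iff₀ (by nlinarith)] at hε1
    nlinarith [mul_nonneg (mul_nonneg hL (by linarith : (0:ℝ) ≤ r - 1)) hε0.le,
      mul_pos hε0 (by linarith : (0:ℝ) < r), show B = 1.9 from rfl]
  rw [hρ]
  nlinarith [mul_pos ht0 (sub_pos.mpr hδ_sum), mul_nonneg (mul_nonneg ht0.le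
    (show (0:ℝ) ≤ B by norm_num [B])) hδ₁0]

theorem exponential_attraction_general (M L r t ε δ₁ δ₂ ρ : ℝ)
    (hL : max 0.62 (0.15 * M) ≤ L) (hr1 : 1 ≤ r)
    (ht0 : 0 < t) (ht1 : t < 1 / (B + C))
    (hε0 : 0 < ε) (hε1 : ε ≤ B / (2 * (L * r + L + r)))
    (hδ₁ : δ₁ = L * ε / (1 - (L + r) * ε))
    (hδ₂ : δ₂ = L * r * ε / (1 - (L + r) * ε))
    (hρ : ρ = (1 - t * B) + t * ((1 - t * B) * δ₁ + δ₂)) :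
    ρ < 1 ∧
      ∀ Φs : ℝ → ℝ →ᵇ ℝ, Admissible r Φs → MemGL L Φs → IsGTFixed M t ε Φs →
        ∀ Φ : ℕ → ℝ → ℝ →ᵇ ℝ,
          (∀ n : ℕ, Admissible r (Φ n) ∧ MemGL L (Φ n)) →
          (∀ n : ℕ, IsGTImage M t ε (Φ n) (Φ (n + 1))) →
          ∀ n : ℕ, (⨆ η : ℝ, ‖Φ n η - Φs η‖) ≤ ρ ^ n * ⨆ η : ℝ, ‖Φ 0 η - Φs η‖ := by
  have hL0 : 0 ≤ L := by linarith [le_of_max_le_left hL]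
  have htBC : t * (B + C) ≤ 1 := by
    rw [lt_div_iff₀ (by norm_num [B, C])] at ht1
    linarith
  have htB : t * B ≤ 1 := by nlinarith [show (0:ℝ) ≤ C by norm_num [C]]
  have hκρ := le_rate hL0 hr1 ht0.le htB hε0.le (add_mul_lt_one hL0 hr1 hε0 hε1) hδ₁ hδ₂ hρ
  have hρ0 := (contraction_nonneg ht0.le htBC hε0.le hL0).trans hκρ
  refine ⟨rate_lt_one hL0 hr1 ht0 hε0 hε1 hδ₁ hδ₂ hρ, fun Φs hΦs hGs hfix Φ hΦ hstep n => ?_⟩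
  refine le_geom (u := fun n => graphDist (Φ n) Φs) hρ0 n fun k _ => ?_
  calc graphDist (Φ (k + 1)) Φs ≤ (1 - t * B + L * ε * t) * graphDist (Φ k) Φs :=
        (hstep k).graphDist_le ht0.le htBC hε0.le hL0 (hΦ k).2 (hΦ k).1.1 hGs hΦs.1 hfix
    _ ≤ ρ * graphDist (Φ k) Φs := mul_le_mul_of_nonneg_right hκρ (graphDist_nonneg _ _)

/-- Exponential attraction to the invariant graph at rate ρ < 1. -/
theorem exponential_attraction (M L r t ε δ₁ δ₂ ρ : ℝ)
    (hM : 0 < M) (hL : max 0.62 (0.15 * M) ≤ L) (hr1 : 1 ≤ r)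
    (hrs : ∀ y ∈ Set.Icc (0:ℝ) 1, |Q * s y| ≤ r)
    (ht0 : 0 < t) (ht1 : t < 1 / (B + C))
    (hε0 : 0 < ε) (hε1 : ε ≤ B / (2 * (L * r + L + r)))
    (hδ₁ : δ₁ = L * ε / (1 - (L + r) * ε))
    (hδ₂ : δ₂ = L * r * ε / (1 - (L + r) * ε))
    (hρ : ρ = (1 - t * B) + t * ((1 - t * B) * δ₁ + δ₂)) :
    ρ < 1 ∧
      ∀ Φs : ℝ → ℝ →ᵇ ℝ, Admissible r Φs → MemGL L Φs → IsGTFixed M t ε Φs →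
        ∀ Φ : ℕ → ℝ → ℝ →ᵇ ℝ,
          (∀ n : ℕ, Admissible r (Φ n) ∧ MemGL L (Φ n)) →
          (∀ n : ℕ, IsGTImage M t ε (Φ n) (Φ (n + 1))) →
          ∀ n : ℕ, (⨆ η : ℝ, ‖Φ n η - Φs η‖) ≤ ρ ^ n * ⨆ η : ℝ, ‖Φ 0 η - Φs η‖ :=
  exponential_attraction_general M L r t ε δ₁ δ₂ ρ hL hr1 ht0 ht1 hε0 hε1 hδ₁ hδ₂ hρ
end Budyko
end
end

section
/- Let L, r, t, ε > 0 with ε*t*(L + r) < 1, and let Φ be an r-admissible graph in G_L. Then for every η ∈ ℝ there exists a unique ξ ∈ ℝ such that η = ξ + ε*t*(Φ(ξ)(ξ) - T_c). -/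
noncomputable section

open scoped BoundedContinuousFunction

namespace Budyko

/-- For each η there is a unique preimage ξ of the iceline shift map. -/
theorem unique_iceline_preimage (L r t ε : ℝ)
    (hL : 0 < L) (hr : 0 < r) (ht : 0 < t) (hε : 0 < ε)
    (hsmall : ε * t * (L + r) < 1)
    (Φ : ℝ → ℝ →ᵇ ℝ) (hΦa : Admissible r Φ) (hΦL : MemGL L Φ) :
    ∀ η : ℝ, ∃! ξ : ℝ, η = ξ + ε * t * (Φ ξ ξ - Tc) := by
  intro η
  have hk0 : 0 ≤ ε * t * (L + r) := by positivity
  have hlip : ∀ a b : ℝ, |Φ a a - Φ b b| ≤ (L + r) * |a - b| := by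
    intro a b
    have h2 : |(Φ a - Φ b) a| ≤ ‖Φ a - Φ b‖ := (Φ a - Φ b).norm_coe_le_norm a
    simp only [BoundedContinuousFunction.coe_sub, Pi.sub_apply] at h2
    have h1 : |Φ a a - Φ b a| ≤ L * |a - b| := h2.trans (hΦL a b)
    have h3 : |Φ b a - Φ b b| ≤ r * |a - b| := hΦa.2 b a b
    calc |Φ a a - Φ b b| = |(Φ a a - Φ b a) + (Φ b a - Φ b b)| := by ring_nf
      _ ≤ |Φ a a - Φ b a| + |Φ b a - Φ b b| := abs_add_le _ _
      _ ≤ L * |a - b| + r * |a - b| := add_le_add h1 h3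
      _ = (L + r) * |a - b| := by ring
  set G : ℝ → ℝ := fun ξ => η - ε * t * (Φ ξ ξ - Tc) with hG
  have hc : ContractingWith ⟨ε * t * (L + r), hk0⟩ G := by
    constructor
    · exact_mod_cast hsmall
    · apply LipschitzWith.of_dist_le_mul
      intro a b
      simp only [Real.dist_eq, hG]
      have he : (η - ε * t * (Φ a a - Tc)) - (η - ε * t * (Φ b b - Tc))
          = ε * t * (Φ b b - Φ a a) := by ring
      rw [he, abs_mul, abs_of_nonneg (by positivity : (0:ℝ) ≤ ε * t), abs_sub_comm]
      calc ε * t * |Φ a a - Φ b b| ≤ ε * t * ((L + r) * |a - b|) := by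
            apply mul_le_mul_of_nonneg_left (hlip a b) (by positivity)
        _ = ↑(⟨ε * t * (L + r), hk0⟩ : NNReal) * |a - b| := by
            push_cast; ring
  have hiff : ∀ ξ : ℝ, (η = ξ + ε * t * (Φ ξ ξ - Tc)) ↔ Function.IsFixedPt G ξ := by
    intro ξ
    simp only [Function.IsFixedPt, hG]
    constructor <;> intro h <;> linarith
  refine ⟨hc.fixedPoint G, (hiff _).2 hc.fixedPoint_isFixedPt, ?_⟩
  intro ξ hξ
  have h1 := hc.fixedPoint_unique ((hiff ξ).1 hξ)
  exact h1
end Budyko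
end
end

section
/- Let L, r, t, ε > 0 and let Φ be an r-admissible graph in G_L. Define the operator 𝒯 on BC(ℝ,ℝ) by (𝒯k)(η) = ε*t*(T_c - Φ(η + k(η))(η + k(η))). Then 𝒯 maps BC(ℝ,ℝ) into itself and satisfies ‖𝒯k₁ - 𝒯k₂‖_∞ ≤ ε*t*(L + r)*‖k₁ - k₂‖_∞ for all k₁, k₂ ∈ BC(ℝ,ℝ); in particular, if ε*t*(L + r) < 1 then 𝒯 is a contraction and has a unique fixed point k_Φ ∈ BC(ℝ,ℝ). -/
noncomputable section

open scoped BoundedContinuousFunction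

namespace Budyko

/-- The operator 𝒯 maps BC(ℝ,ℝ) to itself, is Lipschitz with constant ε t (L + r),
and has a unique fixed point when ε t (L + r) < 1. -/
theorem iceline_operator_contraction (L r t ε : ℝ)
    (hL : 0 < L) (hr : 0 < r) (ht : 0 < t) (hε : 0 < ε)
    (Φ : ℝ → ℝ →ᵇ ℝ) (hΦa : Admissible r Φ) (hΦL : MemGL L Φ) :
    (∀ k : ℝ →ᵇ ℝ, ∃ Tk : ℝ →ᵇ ℝ, ∀ η : ℝ,
        Tk η = ε * t * (Tc - Φ (η + k η) (η + k η))) ∧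
    (∀ k₁ k₂ Tk₁ Tk₂ : ℝ →ᵇ ℝ,
        (∀ η : ℝ, Tk₁ η = ε * t * (Tc - Φ (η + k₁ η) (η + k₁ η))) →
        (∀ η : ℝ, Tk₂ η = ε * t * (Tc - Φ (η + k₂ η) (η + k₂ η))) →
        ‖Tk₁ - Tk₂‖ ≤ ε * t * (L + r) * ‖k₁ - k₂‖) ∧
    (ε * t * (L + r) < 1 →
        ∃! k : ℝ →ᵇ ℝ, ∀ η : ℝ, k η = ε * t * (Tc - Φ (η + k η) (η + k η))) := by
  obtain ⟨hbd, hlip⟩ := hΦa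
  -- the diagonal map s ↦ Φ s s is (L+r)-Lipschitz
  have hdiag : ∀ a b : ℝ, |Φ a a - Φ b b| ≤ (L + r) * |a - b| := by
    intro a b
    have h1 : |Φ a a - Φ b a| ≤ L * |a - b| := by
      calc |Φ a a - Φ b a| = |(Φ a - Φ b) a| := by simp
        _ ≤ ‖Φ a - Φ b‖ := by simpa using BoundedContinuousFunction.norm_coe_le_norm (Φ a - Φ b) a
        _ ≤ L * |a - b| := hΦL a b
    have h2 : |Φ b a - Φ b b| ≤ r * |a - b| := hlip b a b
    calc |Φ a a - Φ b b| = |(Φ a a - Φ b a) + (Φ b a - Φ b b)| := by ring_nf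
      _ ≤ |Φ a a - Φ b a| + |Φ b a - Φ b b| := abs_add_le _ _
      _ ≤ L * |a - b| + r * |a - b| := add_le_add h1 h2
      _ = (L + r) * |a - b| := by ring
  have hεt : 0 < ε * t := mul_pos hε ht
  have hLr : 0 < L + r := add_pos hL hr
  -- construction of the operator
  have hcont : ∀ k : ℝ →ᵇ ℝ, Continuous fun η : ℝ =>
      ε * t * (Tc - Φ (η + k η) (η + k η)) := by
    intro k
    have hsc : Continuous fun η : ℝ => η + k η := continuous_id.add k.continuous
    have hg : Continuous fun s : ℝ => Φ s s := by
      have : LipschitzWith (Real.toNNReal (L + r)) (fun s : ℝ => Φ s s) := by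
        apply LipschitzWith.of_dist_le_mul
        intro a b
        rw [Real.dist_eq, Real.dist_eq, Real.coe_toNNReal _ hLr.le]
        exact hdiag a b
      exact this.continuous
    exact continuous_const.mul (continuous_const.sub (hg.comp hsc))
  set Top : (ℝ →ᵇ ℝ) → (ℝ →ᵇ ℝ) := fun k =>
    BoundedContinuousFunction.ofNormedAddCommGroup
      (fun η : ℝ => ε * t * (Tc - Φ (η + k η) (η + k η))) (hcont k)
      (ε * t * (|Tc| + r)) (by
        intro η
        have h1 : |Φ (η + k η) (η + k η)| ≤ r := by
          calc |Φ (η + k η) (η + k η)| ≤ ‖Φ (η + k η)‖ := by simpa using BoundedContinuousFunction.norm_coe_le_norm (Φ (η + k η)) (η + k η)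
            _ ≤ r := hbd _
        have : |Tc - Φ (η + k η) (η + k η)| ≤ |Tc| + r :=
          (abs_sub _ _).trans (add_le_add le_rfl h1)
        calc ‖ε * t * (Tc - Φ (η + k η) (η + k η))‖
            = ε * t * |Tc - Φ (η + k η) (η + k η)| := by
              rw [Real.norm_eq_abs, abs_mul, abs_of_pos hεt]
          _ ≤ ε * t * (|Tc| + r) := by
              exact mul_le_mul_of_nonneg_left this hεt.le) with hTop
  have hTopApp : ∀ (k : ℝ →ᵇ ℝ) (η : ℝ),
      Top k η = ε * t * (Tc - Φ (η + k η) (η + k η)) := fun k η => rfl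
  -- the contraction estimate
  have key : ∀ k₁ k₂ Tk₁ Tk₂ : ℝ →ᵇ ℝ,
      (∀ η : ℝ, Tk₁ η = ε * t * (Tc - Φ (η + k₁ η) (η + k₁ η))) →
      (∀ η : ℝ, Tk₂ η = ε * t * (Tc - Φ (η + k₂ η) (η + k₂ η))) →
      ‖Tk₁ - Tk₂‖ ≤ ε * t * (L + r) * ‖k₁ - k₂‖ := by
    intro k₁ k₂ Tk₁ Tk₂ h1 h2
    apply BoundedContinuousFunction.norm_le (by positivity) |>.mpr
    intro η
    have hk : |k₁ η - k₂ η| ≤ ‖k₁ - k₂‖ := by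
      calc |k₁ η - k₂ η| = |(k₁ - k₂) η| := by simp
        _ ≤ ‖k₁ - k₂‖ := by simpa using BoundedContinuousFunction.norm_coe_le_norm (k₁ - k₂) η
    have hd : |Φ (η + k₁ η) (η + k₁ η) - Φ (η + k₂ η) (η + k₂ η)| ≤
        (L + r) * ‖k₁ - k₂‖ := by
      calc |Φ (η + k₁ η) (η + k₁ η) - Φ (η + k₂ η) (η + k₂ η)| ≤
          (L + r) * |(η + k₁ η) - (η + k₂ η)| := hdiag _ _
        _ = (L + r) * |k₁ η - k₂ η| := by ring_nf
        _ ≤ (L + r) * ‖k₁ - k₂‖ := mul_le_mul_of_nonneg_left hk hLr.le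
    calc ‖(Tk₁ - Tk₂) η‖ = ‖Tk₁ η - Tk₂ η‖ := by simp
      _ = ε * t * |Φ (η + k₁ η) (η + k₁ η) - Φ (η + k₂ η) (η + k₂ η)| := by
          rw [h1, h2, Real.norm_eq_abs, ← mul_sub, abs_mul, abs_of_pos hεt,
            sub_sub_sub_cancel_left, abs_sub_comm]
      _ ≤ ε * t * ((L + r) * ‖k₁ - k₂‖) := mul_le_mul_of_nonneg_left hd hεt.le
      _ = ε * t * (L + r) * ‖k₁ - k₂‖ := by ring
  refine ⟨fun k => ⟨Top k, hTopApp k⟩, key, ?_⟩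
  intro hcontr
  have hK : (0:ℝ) ≤ ε * t * (L + r) := by positivity
  have hcw : ContractingWith (Real.toNNReal (ε * t * (L + r))) Top := by
    constructor
    · rwa [← NNReal.coe_lt_one, Real.coe_toNNReal _ hK]
    · apply LipschitzWith.of_dist_le_mul
      intro k₁ k₂
      rw [dist_eq_norm, dist_eq_norm, Real.coe_toNNReal _ hK]
      exact key k₁ k₂ _ _ (hTopApp k₁) (hTopApp k₂)
  refine ⟨hcw.fixedPoint Top, ?_, ?_⟩
  · intro η
    conv_lhs => rw [← hcw.fixedPoint_isFixedPt]
    exact hTopApp _ η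
  · intro k hk
    apply hcw.fixedPoint_unique
    ext η
    rw [hTopApp k η, ← hk η]
end Budyko
end
end

section
/- Let L, r > 0, 0 < t ≤ 1, and ε > 0 with (L + r)*ε < 1. Let Φ and Γ be r-admissible graphs in G_L, let η ∈ ℝ, and let ξ, ζ ∈ ℝ satisfy η = ξ + ε*t*(Φ(ξ)(ξ) - T_c) and η = ζ + ε*t*(Γ(ζ)(ζ) - T_c). Then |ξ - ζ| ≤ (t*ε/(1 - (L + r)*ε)) * sup_{σ∈ℝ} ‖Φ(σ) - Γ(σ)‖_∞. -/
noncomputable section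

open scoped BoundedContinuousFunction

namespace Budyko

/-! Subtracting the two defining relations gives `ξ - ζ = tε (Γ(ζ)(ζ) - Φ(ξ)(ξ))`. The diagonal
`σ ↦ Φ(σ)(σ)` is `(L + r)`-Lipschitz, so `|ξ - ζ| ≤ tε (D + (L + r) |ξ - ζ|)` with
`D = sup_σ ‖Φ(σ) - Γ(σ)‖`, and the last term is absorbed because `tε (L + r) ≤ (L + r) ε < 1`. -/

theorem le_div_one_sub_mul_of_le_mul_add {x a b K D : ℝ} (hx : 0 ≤ x) (hK : 0 ≤ K)
    (hab : a ≤ b) (hKb : K * b < 1) (h : x ≤ a * (D + K * x)) :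
    x ≤ a / (1 - K * b) * D := by
  rw [div_mul_eq_mul_div, le_div_iff₀ (by linarith)]
  nlinarith [mul_nonneg (mul_nonneg hx hK) (sub_nonneg.2 hab)]

theorem abs_apply_sub_apply_le_norm_sub (f g : ℝ →ᵇ ℝ) (x : ℝ) : |f x - g x| ≤ ‖f - g‖ :=
  dist_eq_norm f g ▸ BoundedContinuousFunction.abs_sub_coe_le_dist f g

theorem MemGL.nonneg {L : ℝ} {Φ : ℝ → ℝ →ᵇ ℝ} (hΦ : MemGL L Φ) : 0 ≤ L := by
  simpa using (norm_nonneg _).trans (hΦ 1 0)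

theorem Admissible.nonneg {r : ℝ} {Φ : ℝ → ℝ →ᵇ ℝ} (hΦ : Admissible r Φ) : 0 ≤ r :=
  (norm_nonneg _).trans (hΦ.1 0)

theorem Admissible.bddAbove_range_norm_sub {r r' : ℝ} {Φ Γ : ℝ → ℝ →ᵇ ℝ}
    (hΦ : Admissible r Φ) (hΓ : Admissible r' Γ) :
    BddAbove (Set.range fun σ ↦ ‖Φ σ - Γ σ‖) :=
  ⟨r + r', Set.forall_mem_range.2 fun σ ↦
    (norm_sub_le _ _).trans (add_le_add (hΦ.1 σ) (hΓ.1 σ))⟩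

theorem abs_apply_self_sub_apply_self_le {L r : ℝ} {Φ : ℝ → ℝ →ᵇ ℝ}
    (hΦL : MemGL L Φ) (hΦa : Admissible r Φ) (ξ ζ : ℝ) :
    |Φ ξ ξ - Φ ζ ζ| ≤ (L + r) * |ξ - ζ| :=
  calc |Φ ξ ξ - Φ ζ ζ| ≤ |Φ ξ ξ - Φ ζ ξ| + |Φ ζ ξ - Φ ζ ζ| := abs_sub_le _ _ _
    _ ≤ L * |ξ - ζ| + r * |ξ - ζ| :=
      add_le_add ((abs_apply_sub_apply_le_norm_sub _ _ ξ).trans (hΦL ξ ζ))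
        (hΦa.2 ζ ξ ζ)
    _ = (L + r) * |ξ - ζ| := (add_mul _ _ _).symm

theorem iceline_preimage_comparison_general (L r t ε : ℝ)
    (ht0 : 0 < t) (ht1 : t ≤ 1) (hε : 0 < ε)
    (hsmall : (L + r) * ε < 1)
    (Φ Γ : ℝ → ℝ →ᵇ ℝ)
    (hΦa : Admissible r Φ) (hΦL : MemGL L Φ)
    (hΓa : Admissible r Γ)
    (η ξ ζ : ℝ)
    (hξ : η = ξ + ε * t * (Φ ξ ξ - Tc))
    (hζ : η = ζ + ε * t * (Γ ζ ζ - Tc)) :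
    |ξ - ζ| ≤ (t * ε / (1 - (L + r) * ε)) * ⨆ σ : ℝ, ‖Φ σ - Γ σ‖ := by
  have hgraphs : |Γ ζ ζ - Φ ζ ζ| ≤ ⨆ σ : ℝ, ‖Φ σ - Γ σ‖ := by
    rw [abs_sub_comm]
    exact (abs_apply_sub_apply_le_norm_sub _ _ ζ).trans
      (le_ciSup (hΦa.bddAbove_range_norm_sub hΓa) ζ)
  have hslope : |Γ ζ ζ - Φ ξ ξ| ≤ (⨆ σ : ℝ, ‖Φ σ - Γ σ‖) + (L + r) * |ξ - ζ| := by
    calc |Γ ζ ζ - Φ ξ ξ| ≤ |Γ ζ ζ - Φ ζ ζ| + |Φ ζ ζ - Φ ξ ξ| := abs_sub_le _ _ _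
      _ ≤ _ := by
        rw [abs_sub_comm (Φ ζ ζ)]
        exact add_le_add hgraphs (abs_apply_self_sub_apply_self_le hΦL hΦa ξ ζ)
  have hdiff : |ξ - ζ| = t * ε * |Γ ζ ζ - Φ ξ ξ| := by
    rw [show ξ - ζ = t * ε * (Γ ζ ζ - Φ ξ ξ) by linear_combination hζ - hξ, abs_mul,
      abs_of_pos (by positivity)]
  exact le_div_one_sub_mul_of_le_mul_add (abs_nonneg _) (add_nonneg hΦL.nonneg hΦa.nonneg)
    (mul_le_of_le_one_left hε.le ht1) hsmall
    (hdiff.trans_le (mul_le_mul_of_nonneg_left hslope (by positivity)))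

/-- Estimate comparing the two iceline preimages of a common η under two graphs. -/
theorem iceline_preimage_comparison (L r t ε : ℝ)
    (hL : 0 < L) (hr : 0 < r) (ht0 : 0 < t) (ht1 : t ≤ 1) (hε : 0 < ε)
    (hsmall : (L + r) * ε < 1)
    (Φ Γ : ℝ → ℝ →ᵇ ℝ)
    (hΦa : Admissible r Φ) (hΦL : MemGL L Φ)
    (hΓa : Admissible r Γ) (hΓL : MemGL L Γ)
    (η ξ ζ : ℝ)
    (hξ : η = ξ + ε * t * (Φ ξ ξ - Tc))
    (hζ : η = ζ + ε * t * (Γ ζ ζ - Tc)) :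
    |ξ - ζ| ≤ (t * ε / (1 - (L + r) * ε)) * ⨆ σ : ℝ, ‖Φ σ - Γ σ‖ :=
  iceline_preimage_comparison_general L r t ε ht0 ht1 hε hsmall Φ Γ hΦa hΦL hΓa η ξ ζ hξ hζ
end Budyko
end
end

section
/- For every M > 0, every bounded continuous T : ℝ → ℝ and every η ∈ ℝ, one has sup_{y∈ℝ} |F(T,η)(y)| ≥ B * sup_{y∈ℝ} |T(y) - T*(η)(y)|. -/
noncomputable section

open scoped BoundedContinuousFunction

namespace Budyko

lemma abs_tanh_le_one (x : ℝ) : |Real.tanh x| ≤ 1 := by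
  rw [Real.tanh_eq_sinh_div_cosh, abs_div, abs_of_pos (Real.cosh_pos x),
    div_le_one (Real.cosh_pos x), abs_le]
  have h1 := Real.cosh_add_sinh x
  have h2 := Real.cosh_sub_sinh x
  constructor <;> nlinarith [Real.exp_pos x, Real.exp_pos (-x)]

lemma clamp_mem (y : ℝ) : 0 ≤ clamp y ∧ clamp y ≤ 1 :=
  ⟨le_min (le_max_right y 0) zero_le_one, min_le_right _ _⟩

lemma continuous_clamp : Continuous clamp := by
  unfold clamp
  exact ((continuous_id.max continuous_const).min continuous_const)

lemma continuous_tanh' : Continuous Real.tanh := by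
  have h : Real.tanh = fun x => Real.sinh x / Real.cosh x := funext Real.tanh_eq_sinh_div_cosh
  rw [h]
  exact Real.continuous_sinh.div Real.continuous_cosh fun x => (Real.cosh_pos x).ne'

lemma continuous_sTerm (M η : ℝ) :
    Continuous (fun y => Q * sTilde y * (1 - albedo M η y)) := by
  have hc : Continuous clamp := continuous_clamp
  have hs : Continuous sTilde := by
    have : Continuous (fun x : ℝ => 1 - 0.241 * (3 * x ^ 2 - 1)) := by fun_prop
    exact this.comp hc
  have ha : Continuous (fun y => albedo M η y) := by
    unfold albedo
    exact continuous_const.add (continuous_const.mul (continuous_tanh'.comp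
      (continuous_const.mul (hc.sub continuous_const))))
  exact (continuous_const.mul hs).mul (continuous_const.sub ha)

lemma sTilde_bounds (y : ℝ) : 0 ≤ sTilde y ∧ sTilde y ≤ 1.241 := by
  obtain ⟨h0, h1⟩ := clamp_mem y
  unfold sTilde s
  constructor <;> nlinarith [sq_nonneg (clamp y)]

lemma albedo_term_bound (M η y : ℝ) : |1 - albedo M η y| ≤ 1 := by
  have h := abs_le.1 (abs_tanh_le_one (M * (clamp y - η)))
  unfold albedo
  rw [abs_le]
  constructor <;> nlinarith [h.1, h.2]

lemma abs_F_le (M : ℝ) (T : ℝ →ᵇ ℝ) (η y : ℝ) :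
    |F M T η y| ≤ 343 * 1.241 + (B + C) * ‖T‖ + A + C * |∫ u in (0:ℝ)..1, T u| := by
  have hs := sTilde_bounds y
  have ha := abs_le.1 (albedo_term_bound M η y)
  have hP : |Q * sTilde y * (1 - albedo M η y)| ≤ 343 * 1.241 := by
    rw [abs_le]
    unfold Q
    constructor <;> nlinarith [hs.1, hs.2, ha.1, ha.2]
  have hP' := abs_le.1 hP
  have hT := abs_le.1 (show |T y| ≤ ‖T‖ from by
    simpa [Real.norm_eq_abs] using T.norm_coe_le_norm y)
  set I := ∫ u in (0:ℝ)..1, T u with hIdef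
  have hI1 := le_abs_self I
  have hI2 := neg_abs_le I
  have hBC : (0:ℝ) < B + C := by norm_num [B, C]
  have hC : (0:ℝ) < C := by norm_num [C]
  have hA : (0:ℝ) ≤ A := by norm_num [A]
  rw [abs_le]
  unfold F
  rw [← hIdef]
  constructor <;> nlinarith [hP'.1, hP'.2, hT.1, hT.2,
    mul_le_mul_of_nonneg_left hT.2 hBC.le, mul_le_mul_of_nonneg_left hT.1 hBC.le,
    mul_le_mul_of_nonneg_left hI1 hC.le, mul_le_mul_of_nonneg_left hI2 hC.le]

/-- The Budyko vector field dominates B times the distance to the local equilibrium. -/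
theorem field_dominates_distance_to_equilibrium (M : ℝ) (hM : 0 < M)
    (T : ℝ →ᵇ ℝ) (η : ℝ) :
    B * (⨆ y : ℝ, |T y - Tstar M η y|) ≤ ⨆ y : ℝ, |F M T η y| := by
  have hB : (0:ℝ) < B := by norm_num [B]
  have hC : (0:ℝ) < C := by norm_num [C]
  have hBC : (0:ℝ) < B + C := by norm_num [B, C]
  set I := ∫ u in (0:ℝ)..1, T u with hIdef
  have hbdd : BddAbove (Set.range fun y => |F M T η y|) := by
    refine ⟨343 * 1.241 + (B + C) * ‖T‖ + A + C * |I|, ?_⟩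
    rintro _ ⟨y, rfl⟩
    exact abs_F_le M T η y
  set Sf := ⨆ y : ℝ, |F M T η y| with hSfdef
  have hle : ∀ y, |F M T η y| ≤ Sf := fun y => le_ciSup hbdd y
  have hSf0 : 0 ≤ Sf := le_trans (abs_nonneg _) (hle 0)
  set J := ∫ u in (0:ℝ)..1, F M T η u with hJdef
  have hJle : |J| ≤ Sf := by
    have h := intervalIntegral.norm_integral_le_of_norm_le_const
      (C := Sf) (f := fun u => F M T η u) (a := (0:ℝ)) (b := 1)
      (fun x _ => by simpa [Real.norm_eq_abs] using hle x)
    simpa [Real.norm_eq_abs] using h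
  -- integrability
  have h1 : IntervalIntegrable (fun u => Q * sTilde u * (1 - albedo M η u)) MeasureTheory.volume 0 1 := by
    exact (continuous_sTerm M η).intervalIntegrable _ _
  have h2 : IntervalIntegrable (fun u => (B + C) * T u) MeasureTheory.volume 0 1 :=
    (continuous_const.mul T.continuous).intervalIntegrable _ _
  -- J = g - A - B * I
  have hgJ : J = g M η - A - B * I := by
    have heq : (fun u => F M T η u)
        = fun u => (Q * sTilde u * (1 - albedo M η u) - (B + C) * T u) + (C * I - A) := by
      funext u
      show F M T η u = _
      unfold F
      rw [← hIdef]; ring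
    rw [hJdef, heq, intervalIntegral.integral_add (h1.sub h2) intervalIntegrable_const,
      intervalIntegral.integral_sub h1 h2, intervalIntegral.integral_const]
    have hPg : (∫ u in (0:ℝ)..1, Q * sTilde u * (1 - albedo M η u)) = g M η := by
      unfold g
      apply intervalIntegral.integral_congr
      intro u hu
      rw [Set.uIcc_of_le (by norm_num : (0:ℝ) ≤ 1)] at hu
      have hcl : clamp u = u := by
        unfold clamp
        rw [max_eq_left hu.1, min_eq_left hu.2]
      simp [sTilde, hcl]
    have hTg : (∫ u in (0:ℝ)..1, (B + C) * T u) = (B + C) * I := by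
      rw [hIdef]
      exact intervalIntegral.integral_const_mul _ _
    rw [hPg, hTg, smul_eq_mul]; ring
  -- pointwise identity
  have hid : ∀ y, T y - Tstar M η y = (-(F M T η y) - (C / B) * J) / (B + C) := by
    intro y
    have hgA : g M η = A + (J + B * I) := by linarith
    have hF : F M T η y
        = Q * sTilde y * (1 - albedo M η y) - (B + C) * T y - A + C * I := by
      unfold F; rw [← hIdef]
    unfold Tstar
    rw [hgA, hF]
    field_simp
    ring
  have hBne : B ≠ 0 := hB.ne'
  have hpt : ∀ y, |T y - Tstar M η y| ≤ Sf / B := by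
    intro y
    rw [hid y, abs_div, abs_of_pos hBC, div_le_div_iff₀ hBC hB]
    have hX : |-F M T η y - C / B * J| ≤ Sf + (C / B) * Sf := by
      have he : -F M T η y - C / B * J = -(F M T η y + (C / B) * J) := by ring
      rw [he, abs_neg]
      refine (abs_add_le _ _).trans (add_le_add (hle y) ?_)
      rw [abs_mul, abs_of_pos (div_pos hC hB)]
      exact mul_le_mul_of_nonneg_left hJle (div_pos hC hB).le
    calc |-F M T η y - C / B * J| * B ≤ (Sf + (C / B) * Sf) * B :=
          mul_le_mul_of_nonneg_right hX hB.le
      _ = Sf * (B + C) := by field_simp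
  have hsup : (⨆ y : ℝ, |T y - Tstar M η y|) ≤ Sf / B := ciSup_le hpt
  calc B * (⨆ y : ℝ, |T y - Tstar M η y|) ≤ B * (Sf / B) :=
        mul_le_mul_of_nonneg_left hsup hB.le
    _ = Sf := by field_simp
end Budyko
end
end

section
/- For every M > 0, every η ∈ ℝ, every t with 0 < t ≤ 1/(B+C), and all bounded continuous T₁, T₂ : ℝ → ℝ, the Euler step of Budyko's equation with the ice line frozen at η contracts with factor 1 - t*B: sup_{y∈ℝ} |(T₁(y) + t*F(T₁,η)(y)) - (T₂(y) + t*F(T₂,η)(y))| ≤ (1 - t*B) * sup_{y∈ℝ} |T₁(y) - T₂(y)|. -/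
noncomputable section

open scoped BoundedContinuousFunction

namespace Budyko

/-- The Euler step of Budyko's equation (iceline frozen at η) contracts with factor 1 - tB. -/
theorem euler_step_contraction (M η t : ℝ) (hM : 0 < M)
    (ht0 : 0 < t) (ht1 : t ≤ 1 / (B + C)) (T₁ T₂ : ℝ →ᵇ ℝ) :
    (⨆ y : ℝ, |(T₁ y + t * F M T₁ η y) - (T₂ y + t * F M T₂ η y)|) ≤
      (1 - t * B) * ⨆ y : ℝ, |T₁ y - T₂ y| := by
  have hBC : (0:ℝ) < B + C := by norm_num [B, C]
  set N := ‖T₁ - T₂‖ with hN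
  have hsup : (⨆ y : ℝ, |T₁ y - T₂ y|) = N := by
    rw [hN, BoundedContinuousFunction.norm_eq_iSup_norm]
    simp [BoundedContinuousFunction.coe_sub]
  have hptw : ∀ y : ℝ, |T₁ y - T₂ y| ≤ N := by
    intro y
    have := BoundedContinuousFunction.norm_coe_le_norm (T₁ - T₂) y
    simpa using this
  have hint : |(∫ u in (0:ℝ)..1, T₁ u) - ∫ u in (0:ℝ)..1, T₂ u| ≤ N := by
    have hi1 : IntervalIntegrable (fun u => T₁ u) MeasureTheory.volume 0 1 :=
      (T₁.continuous).intervalIntegrable _ _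
    have hi2 : IntervalIntegrable (fun u => T₂ u) MeasureTheory.volume 0 1 :=
      (T₂.continuous).intervalIntegrable _ _
    rw [← intervalIntegral.integral_sub hi1 hi2]
    have := intervalIntegral.norm_integral_le_of_norm_le_const
      (a := (0:ℝ)) (b := 1) (C := N) (f := fun u => T₁ u - T₂ u)
      (fun x _ => by simpa using hptw x)
    simpa using this
  have htBC : t * (B + C) ≤ 1 := by
    rw [← le_div_iff₀ hBC] at *; exact ht1
  have hC : (0:ℝ) ≤ C := by norm_num [C]
  rw [hsup]
  apply ciSup_le
  intro y
  have hdiff : (T₁ y + t * F M T₁ η y) - (T₂ y + t * F M T₂ η y)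
      = (1 - t * (B + C)) * (T₁ y - T₂ y)
        + t * C * ((∫ u in (0:ℝ)..1, T₁ u) - ∫ u in (0:ℝ)..1, T₂ u) := by
    simp only [F]; ring
  rw [hdiff]
  calc |(1 - t * (B + C)) * (T₁ y - T₂ y)
        + t * C * ((∫ u in (0:ℝ)..1, T₁ u) - ∫ u in (0:ℝ)..1, T₂ u)|
      ≤ |(1 - t * (B + C)) * (T₁ y - T₂ y)|
        + |t * C * ((∫ u in (0:ℝ)..1, T₁ u) - ∫ u in (0:ℝ)..1, T₂ u)| := abs_add_le _ _
    _ = (1 - t * (B + C)) * |T₁ y - T₂ y|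
        + t * C * |(∫ u in (0:ℝ)..1, T₁ u) - ∫ u in (0:ℝ)..1, T₂ u| := by
        rw [abs_mul, abs_mul, abs_of_nonneg (show (0:ℝ) ≤ 1 - t * (B + C) by linarith), abs_of_nonneg (mul_nonneg ht0.le hC)]
    _ ≤ (1 - t * (B + C)) * N + t * C * N := by
        gcongr <;> first | linarith | exact hptw y | exact hint
    _ = (1 - t * B) * N := by ring
end Budyko
end
end

section
/- For every M > 10, the iceline-temperature function h(η) = T*(η)(η) - T_c has exactly two roots in the unit interval: there exist η₁, η₂ with 0 < η₁ < η₂ < 1 such that h(η₁) = h(η₂) = 0, h(η) > 0 for all η ∈ (η₁, η₂), and h(η) < 0 for all η ∈ [0, η₁) ∪ (η₂, 1]. -/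
noncomputable section

open scoped BoundedContinuousFunction

namespace Budyko

/-!
On `[0, 1]` the clamp is inactive and the albedo at the iceline is `0.47`, so `T*(η)(η) - T_c`
is an affine function of `s(η)` and of the `s`-weighted average
`J(η) = ∫₀¹ s(y) tanh(M (y - η)) dy`. Substituting `u = y - η` and expanding the quadratic `s`
around `η` writes `J` through the moments `∫_{-η}^{1-η} u^k tanh(M u) du`, `k ≤ 2`, which makes
the derivatives of `J` explicit. As `1 - tanh x ≤ 2 e^{-2x}`, for `M > 10` these moments are
close to those of `sign u`, and this gives `h(0) < 0 < h(1/2)`, `h(1) < 0`, `h' > 0` on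
`(0, 1/2)` and `h'' < 0` on `(1/2, 1)`. Monotonicity leaves one root in `(0, 1/2)` and strict
concavity one in `(1/2, 1)`.
-/

open Real Set intervalIntegral

theorem exists_two_roots_of_strictMonoOn_of_strictConcaveOn {f : ℝ → ℝ} {a c d : ℝ}
    (hac : a < c) (hcd : c < d) (hf : ContinuousOn f (Icc a d))
    (hmono : StrictMonoOn f (Icc a c)) (hconc : StrictConcaveOn ℝ (Icc c d) f)
    (ha : f a < 0) (hc : 0 < f c) (hd : f d < 0) :
    ∃ x₁ x₂ : ℝ, a < x₁ ∧ x₁ < x₂ ∧ x₂ < d ∧ f x₁ = 0 ∧ f x₂ = 0 ∧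
      (∀ x : ℝ, x₁ < x → x < x₂ → 0 < f x) ∧
      (∀ x : ℝ, (a ≤ x ∧ x < x₁) ∨ (x₂ < x ∧ x ≤ d) → f x < 0) := by
  obtain ⟨x₁, ⟨hax₁, hx₁c⟩, hx₁⟩ := intermediate_value_Ioo hac.le
    (hf.mono (Icc_subset_Icc_right hcd.le)) ⟨ha, hc⟩
  obtain ⟨x₂, ⟨hcx₂, hx₂d⟩, hx₂⟩ := intermediate_value_Ioo' hcd.le
    (hf.mono (Icc_subset_Icc_left hac.le)) ⟨hd, hc⟩
  have hx₁mem : x₁ ∈ Icc a c := ⟨hax₁.le, hx₁c.le⟩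
  have hx₂mem : x₂ ∈ Icc c d := ⟨hcx₂.le, hx₂d.le⟩
  refine ⟨x₁, x₂, hax₁, hx₁c.trans hcx₂, hx₂d, hx₁, hx₂, fun x hx₁x hxx₂ => ?_, ?_⟩
  · rcases le_or_gt x c with hxc | hcx
    · exact hx₁ ▸ hmono hx₁mem ⟨hax₁.le.trans hx₁x.le, hxc⟩ hx₁x
    · have := hconc.lt_on_openSegment (left_mem_Icc.2 hcd.le) hx₂mem hcx₂.ne
        (by rw [openSegment_eq_Ioo hcx₂]; exact ⟨hcx, hxx₂⟩)
      rwa [hx₂, min_eq_right hc.le] at this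
  · rintro x (⟨hax, hxx₁⟩ | ⟨hx₂x, hxd⟩)
    · exact hx₁ ▸ hmono ⟨hax, hxx₁.le.trans hx₁c.le⟩ hx₁mem hxx₁
    · have := hconc.lt_on_openSegment (left_mem_Icc.2 hcd.le) ⟨hcx₂.le.trans hx₂x.le, hxd⟩
        (hcx₂.trans hx₂x).ne (by rw [openSegment_eq_Ioo (hcx₂.trans hx₂x)]; exact ⟨hcx₂, hx₂x⟩)
      rw [hx₂, min_lt_iff] at this
      exact this.resolve_left hc.not_gt

lemma hasDerivAt_tanh (x : ℝ) : HasDerivAt tanh (1 - tanh x ^ 2) x := by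
  have h := (hasDerivAt_sinh x).fun_div (hasDerivAt_cosh x) (cosh_pos x).ne'
  have e : (cosh x * cosh x - sinh x * sinh x) / cosh x ^ 2 = 1 - tanh x ^ 2 := by
    rw [tanh_eq_sinh_div_cosh, div_pow, one_sub_div (pow_ne_zero 2 (cosh_pos x).ne')]
    ring
  simpa only [e, ← tanh_eq_sinh_div_cosh] using h

lemma continuous_tanh : Continuous tanh :=
  continuous_iff_continuousAt.2 fun x => (hasDerivAt_tanh x).continuousAt

lemma tanh_nonneg {x : ℝ} (hx : 0 ≤ x) : 0 ≤ tanh x := by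
  rw [tanh_eq_sinh_div_cosh]
  exact div_nonneg (sinh_nonneg_iff.2 hx) (cosh_pos x).le

lemma one_sub_tanh_le (x : ℝ) : 1 - tanh x ≤ 2 * exp (-(2 * x)) := by
  have hx := exp_pos x
  have hnx := exp_pos (-x)
  have h2x : exp (-(2 * x)) = exp (-x) * exp (-x) := by rw [← exp_add]; ring_nf
  rw [tanh_eq, h2x, one_sub_div (by positivity), div_le_iff₀ (by positivity)]
  have h1 : exp x * exp (-x) = 1 := by rw [← exp_add, add_neg_cancel, exp_zero]
  nlinarith [mul_pos hnx (mul_pos hnx hnx)]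

lemma two_mul_le_exp (u : ℝ) : 2 * u ≤ exp u := by
  rcases le_total u 0 with hu | hu
  · linarith [exp_pos u]
  · nlinarith [quadratic_le_exp_of_nonneg hu]

lemma mul_exp_neg_le_half (u : ℝ) : u * exp (-u) ≤ 1 / 2 := by
  have := two_mul_le_exp u
  rw [exp_neg, ← div_eq_mul_inv, div_le_iff₀ (exp_pos u)]
  linarith

lemma eleven_div_thirteen_le_tanh {x : ℝ} (hx : 2 ≤ x) : 11 / 13 ≤ tanh x := by
  have h4 : 13 ≤ exp 4 := by nlinarith [quadratic_le_exp_of_nonneg (by norm_num : (0:ℝ) ≤ 4)]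
  have : exp (-(2 * x)) ≤ 1 / 13 := by
    calc exp (-(2 * x)) ≤ exp (-4) := exp_le_exp.2 (by linarith)
      _ = 1 / exp 4 := by rw [exp_neg, one_div]
      _ ≤ 1 / 13 := one_div_le_one_div_of_le (by norm_num) h4
  linarith [one_sub_tanh_le x]

lemma mul_one_sub_tanh_sq_le {M x : ℝ} (hM : 0 ≤ M) (hx : M ≤ 2 * x) :
    M * (1 - tanh x ^ 2) ≤ 2 := by
  have h1 : 1 - tanh x ^ 2 ≤ 2 * (1 - tanh x) := by nlinarith [tanh_lt_one x, neg_one_lt_tanh x]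
  have h2 := mul_exp_neg_le_half (2 * x)
  have h3 := one_sub_tanh_le x
  calc M * (1 - tanh x ^ 2) ≤ M * (4 * exp (-(2 * x))) := by gcongr; linarith
    _ ≤ 2 * x * (4 * exp (-(2 * x))) := by gcongr
    _ ≤ 2 := by linarith

lemma hasDerivAt_tanh_comp_affine (M a b η : ℝ) :
    HasDerivAt (fun η => tanh (M * (a + b * η))) (M * b * (1 - tanh (M * (a + b * η)) ^ 2)) η := by
  refine ((hasDerivAt_tanh (M * (a + b * η))).comp η
    ((((hasDerivAt_id η).const_mul b).const_add a).const_mul M)).congr_deriv ?_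
  simp only [mul_one]
  ring

def tanhPrimitive (M : ℝ) (k : ℕ) (x : ℝ) : ℝ := ∫ t in (0:ℝ)..x, t ^ k * tanh (M * t)

def tanhMoment (M : ℝ) (k : ℕ) (η : ℝ) : ℝ := tanhPrimitive M k (1 - η) - tanhPrimitive M k (-η)

section tanhPrimitive

variable {M : ℝ} {k : ℕ} {x : ℝ}

lemma continuous_pow_mul_tanh (M : ℝ) (k : ℕ) : Continuous fun t : ℝ => t ^ k * tanh (M * t) :=
  (continuous_pow k).mul (continuous_tanh.comp (continuous_const.mul continuous_id))

lemma hasDerivAt_tanhPrimitive (M : ℝ) (k : ℕ) (x : ℝ) :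
    HasDerivAt (tanhPrimitive M k) (x ^ k * tanh (M * x)) x :=
  ((continuous_pow_mul_tanh M k).integral_hasStrictDerivAt 0 x).hasDerivAt

lemma tanhPrimitive_neg (M : ℝ) (k : ℕ) (x : ℝ) :
    tanhPrimitive M k (-x) = (-1) ^ k * tanhPrimitive M k x := by
  have hodd (t : ℝ) : (-t) ^ k * tanh (M * -t) = -((-1) ^ k * (t ^ k * tanh (M * t))) := by
    rw [neg_pow, mul_neg, tanh_neg]
    ring
  have h := integral_comp_neg (a := x) (b := 0) fun t => t ^ k * tanh (M * t)
  simp only [hodd, neg_zero, integral_neg, integral_const_mul] at h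
  rw [tanhPrimitive, ← h, integral_symm, tanhPrimitive]
  ring

lemma tanhPrimitive_nonneg (hM : 0 ≤ M) (hx : 0 ≤ x) : 0 ≤ tanhPrimitive M k x :=
  integral_nonneg hx fun _ ht => mul_nonneg (pow_nonneg ht.1 k) (tanh_nonneg (mul_nonneg hM ht.1))

lemma tanhPrimitive_le (M : ℝ) (k : ℕ) (hx : 0 ≤ x) :
    tanhPrimitive M k x ≤ x ^ (k + 1) / (k + 1) := by
  have h : tanhPrimitive M k x ≤ ∫ t in (0:ℝ)..x, t ^ k :=
    integral_mono_on hx ((continuous_pow_mul_tanh M k).intervalIntegrable _ _)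
      ((continuous_pow k).intervalIntegrable _ _)
      fun t ht => mul_le_of_le_one_right (pow_nonneg ht.1 k) (tanh_lt_one _).le
  simpa [integral_pow] using h

lemma sub_inv_le_tanhPrimitive_zero (hM : 0 < M) (hx : 0 ≤ x) :
    x - M⁻¹ ≤ tanhPrimitive M 0 x := by
  have hexp : ∫ t in (0:ℝ)..x, 2 * exp (-(2 * M) * t) = (1 - exp (-(2 * M) * x)) / M := by
    rw [integral_const_mul, integral_comp_mul_left exp (by linarith : -(2 * M) ≠ 0), integral_exp,
      smul_eq_mul, mul_zero, exp_zero]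
    field_simp
    ring
  have h : ∫ t in (0:ℝ)..x, (1 - 2 * exp (-(2 * M) * t)) ≤ tanhPrimitive M 0 x := by
    refine integral_mono_on hx (Continuous.intervalIntegrable (by fun_prop) _ _)
      ((continuous_pow_mul_tanh M 0).intervalIntegrable _ _) fun t _ => ?_
    have := one_sub_tanh_le (M * t)
    rw [pow_zero, one_mul, show -(2 * M) * t = -(2 * (M * t)) by ring]
    linarith
  rw [integral_sub intervalIntegrable_const (Continuous.intervalIntegrable (by fun_prop) _ _),
    hexp, integral_const, smul_eq_mul, mul_one, sub_zero] at h
  have : (1 - exp (-(2 * M) * x)) / M ≤ M⁻¹ := by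
    rw [div_eq_mul_inv]
    exact mul_le_of_le_one_left (inv_nonneg.2 hM.le) (by linarith [exp_pos (-(2 * M) * x)])
  linarith

lemma tanhPrimitive_one_ge (hM : 0 < M) (hx : 0 ≤ x) :
    x ^ 2 / 2 - x / (2 * M) ≤ tanhPrimitive M 1 x := by
  have h : ∫ t in (0:ℝ)..x, (t - 1 / (2 * M)) ≤ tanhPrimitive M 1 x := by
    refine integral_mono_on hx (Continuous.intervalIntegrable (by fun_prop) _ _)
      ((continuous_pow_mul_tanh M 1).intervalIntegrable _ _) fun t ht => ?_
    have h1 := one_sub_tanh_le (M * t)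
    have h2 := mul_exp_neg_le_half (2 * (M * t))
    have h3 : t * (1 - tanh (M * t)) ≤ t * (2 * exp (-(2 * (M * t)))) :=
      mul_le_mul_of_nonneg_left h1 ht.1
    have h4 : t * (2 * exp (-(2 * (M * t)))) ≤ 1 / (2 * M) := by
      rw [le_div_iff₀ (by positivity)]
      linarith
    rw [pow_one]
    linarith
  rw [integral_sub (Continuous.intervalIntegrable (by fun_prop) _ _) intervalIntegrable_const,
    integral_id, integral_const, smul_eq_mul] at h
  convert h using 1
  ring

end tanhPrimitive

section tanhMoment

variable (M : ℝ) (k : ℕ) (η : ℝ)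

lemma tanhMoment_eq_integral :
    tanhMoment M k η = ∫ u in -η..1 - η, u ^ k * tanh (M * u) :=
  integral_interval_sub_left ((continuous_pow_mul_tanh M k).intervalIntegrable _ _)
    ((continuous_pow_mul_tanh M k).intervalIntegrable _ _)

lemma hasDerivAt_tanhMoment :
    HasDerivAt (tanhMoment M k)
      ((-η) ^ k * tanh (M * -η) - (1 - η) ^ k * tanh (M * (1 - η))) η := by
  have h1 := (hasDerivAt_tanhPrimitive M k (1 - η)).comp η ((hasDerivAt_id η).const_sub 1)
  have h2 := (hasDerivAt_tanhPrimitive M k (-η)).comp η (hasDerivAt_id η).neg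
  exact (h1.sub h2).congr_deriv (by ring)

end tanhMoment

@[fun_prop]
lemma continuous_s : Continuous s := by
  unfold s
  fun_prop

lemma integral_s : ∫ y in (0:ℝ)..1, s y = 1 := by
  simp only [s]
  rw [integral_sub intervalIntegrable_const (Continuous.intervalIntegrable (by fun_prop) _ _),
    integral_const_mul, integral_sub (Continuous.intervalIntegrable (by fun_prop) _ _)
      intervalIntegrable_const, integral_const_mul, integral_pow]
  norm_num

lemma hasDerivAt_s (η : ℝ) : HasDerivAt s (-(1.446 * η)) η :=
  ((((hasDerivAt_pow 2 η).const_mul 3).sub_const 1).const_mul 0.241 |>.const_sub 1).congr_deriv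
    (by norm_num; ring)

def tanhAvg (M η : ℝ) : ℝ := ∫ y in (0:ℝ)..1, s y * tanh (M * (y - η))

def tanhAvgDeriv (M η : ℝ) : ℝ :=
  -(1.446 * (η * tanhMoment M 0 η + tanhMoment M 1 η) + 1.241 * tanh (M * η)
    + 0.518 * tanh (M * (1 - η)))

def tanhAvgDeriv2 (M η : ℝ) : ℝ :=
  -(1.446 * (tanhMoment M 0 η - tanh (M * (1 - η))) + 1.241 * (M * (1 - tanh (M * η) ^ 2))
    - 0.518 * (M * (1 - tanh (M * (1 - η)) ^ 2)))

section tanhAvg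

variable (M η : ℝ)

lemma tanhAvg_eq_moments : tanhAvg M η =
    s η * tanhMoment M 0 η - 1.446 * η * tanhMoment M 1 η - 0.723 * tanhMoment M 2 η := by
  have hi (k : ℕ) : IntervalIntegrable (fun u : ℝ => u ^ k * tanh (M * u)) MeasureTheory.volume
      (-η) (1 - η) := (continuous_pow_mul_tanh M k).intervalIntegrable _ _
  have hs (u : ℝ) : s (u + η) * tanh (M * u) = s η * (u ^ 0 * tanh (M * u))
      - 1.446 * η * (u ^ 1 * tanh (M * u)) - 0.723 * (u ^ 2 * tanh (M * u)) := by
    simp only [s]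
    ring
  have := integral_comp_sub_right (a := 0) (b := 1) (fun u => s (u + η) * tanh (M * u)) η
  simp only [sub_add_cancel, zero_sub, hs] at this
  rw [tanhAvg, this, integral_sub (((hi 0).const_mul _).sub ((hi 1).const_mul _))
    ((hi 2).const_mul _), integral_sub ((hi 0).const_mul _) ((hi 1).const_mul _),
    integral_const_mul, integral_const_mul, integral_const_mul, tanhMoment_eq_integral,
    tanhMoment_eq_integral, tanhMoment_eq_integral]

lemma hasDerivAt_tanhAvg : HasDerivAt (tanhAvg M) (tanhAvgDeriv M η) η := by
  rw [show tanhAvg M = _ from funext (tanhAvg_eq_moments M)]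
  have := (((hasDerivAt_s η).mul (hasDerivAt_tanhMoment M 0 η)).sub
    (((hasDerivAt_id η).const_mul 1.446).mul (hasDerivAt_tanhMoment M 1 η))).sub
    ((hasDerivAt_tanhMoment M 2 η).const_mul 0.723)
  exact this.congr_deriv (by simp only [tanhAvgDeriv, s, id, mul_neg, tanh_neg]; ring)

lemma hasDerivAt_tanhAvgDeriv : HasDerivAt (tanhAvgDeriv M) (tanhAvgDeriv2 M η) η := by
  have h0 := hasDerivAt_tanh_comp_affine M 0 1 η
  have h1 := hasDerivAt_tanh_comp_affine M 1 (-1) η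
  simp only [zero_add, one_mul, ← sub_eq_add_neg, neg_one_mul] at h0 h1
  have := ((((hasDerivAt_id η).mul (hasDerivAt_tanhMoment M 0 η)).add
    (hasDerivAt_tanhMoment M 1 η)).const_mul 1.446 |>.add (h0.const_mul 1.241)
    |>.add (h1.const_mul 0.518)).neg
  exact this.congr_deriv (by simp only [tanhAvgDeriv2, id, mul_neg, tanh_neg]; ring)

end tanhAvg

lemma clamp_eq_self {y : ℝ} (hy : y ∈ Icc (0:ℝ) 1) : clamp y = y := by
  rw [clamp, max_eq_left hy.1, min_eq_left hy.2]

lemma g_eq (M η : ℝ) : g M η = Q * (0.53 - 0.15 * tanhAvg M η) := by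
  have h : EqOn (fun y => Q * s y * (1 - albedo M η y))
      (fun y => Q * 0.53 * s y - Q * 0.15 * (s y * tanh (M * (y - η)))) (uIcc 0 1) := by
    intro y hy
    rw [uIcc_of_le zero_le_one] at hy
    simp only [albedo, clamp_eq_self hy]
    ring
  have hc : Continuous fun y => s y * tanh (M * (y - η)) :=
    continuous_s.mul (continuous_tanh.comp (by fun_prop))
  rw [g, integral_congr h, integral_sub (Continuous.intervalIntegrable (by fun_prop) _ _)
    ((hc.intervalIntegrable _ _).const_mul _), integral_const_mul, integral_const_mul, integral_s,
    tanhAvg]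
  ring

-- `181.79 = 0.53 Q`, `82.32 = (C / B) 0.15 Q`, `4.94 = B + C` and
-- `184.936 = A + (C / B) (A - 0.53 Q) + T_c (B + C)`.
def icelineTemp (M η : ℝ) : ℝ := (181.79 * s η - 82.32 * tanhAvg M η - 184.936) / 4.94

lemma Tstar_diag_sub_Tc (M : ℝ) {η : ℝ} (hη : η ∈ Icc (0:ℝ) 1) :
    Tstar M η η - Tc = icelineTemp M η := by
  rw [Tstar, sTilde, albedo, clamp_eq_self hη, sub_self, mul_zero, tanh_zero, g_eq, icelineTemp]
  norm_num [Q, A, B, C, Tc]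
  ring

section estimates

variable {M η : ℝ}

lemma neg_one_le_tanhAvg (M η : ℝ) : -1 ≤ tanhAvg M η := by
  have hc : Continuous fun y => s y * tanh (M * (y - η)) :=
    continuous_s.mul (continuous_tanh.comp (by fun_prop))
  have h : ∫ y in (0:ℝ)..1, -s y ≤ tanhAvg M η := by
    refine integral_mono_on zero_le_one (continuous_s.neg.intervalIntegrable _ _)
      (hc.intervalIntegrable _ _) fun y hy => ?_
    have hs : 0 ≤ s y := by simp only [s]; nlinarith [hy.1, hy.2]
    nlinarith [neg_one_lt_tanh (M * (y - η))]
  rwa [integral_neg, integral_s] at h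

lemma one_half_lt_tanhAvg_zero (hM : 10 < M) : 1 / 2 < tanhAvg M 0 := by
  have hM' : M⁻¹ < 10⁻¹ := (inv_lt_inv₀ (by linarith) (by norm_num)).2 hM
  have h0 := sub_inv_le_tanhPrimitive_zero (by linarith : 0 < M) zero_le_one
  have h2 := tanhPrimitive_le M 2 zero_le_one
  have hzero (k : ℕ) : tanhPrimitive M k 0 = 0 := integral_same
  rw [tanhAvg_eq_moments]
  simp only [tanhMoment, neg_zero, sub_zero, hzero, s]
  norm_num at h2 ⊢
  linarith

lemma tanhAvg_half_nonpos (hM : 0 ≤ M) : tanhAvg M (1 / 2) ≤ 0 := by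
  have h1 := tanhPrimitive_nonneg (k := 1) hM (by norm_num : (0:ℝ) ≤ 1 / 2)
  rw [tanhAvg_eq_moments]
  simp only [tanhMoment, tanhPrimitive_neg]
  norm_num
  linarith

lemma tanhAvgDeriv_lt (hM : 10 < M) (h0 : 0 < η) (h1 : η < 1 / 2) :
    tanhAvgDeriv M η < -(3.2 * η) := by
  have hM0 : 0 < M := by linarith
  have hM' : M⁻¹ < 10⁻¹ := (inv_lt_inv₀ hM0 (by norm_num)).2 hM
  have hK0 : 0.9 - 2 * η ≤ tanhMoment M 0 η := by
    have ha := sub_inv_le_tanhPrimitive_zero hM0 (by linarith : 0 ≤ 1 - η)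
    have hb := tanhPrimitive_le M 0 h0.le
    simp only [tanhMoment, tanhPrimitive_neg, pow_zero, one_mul]
    norm_num at hb ⊢
    linarith
  have hK1 : ((1 - η) ^ 2 + η ^ 2) / 2 - 1 / 20 ≤ tanhMoment M 1 η := by
    have ha := tanhPrimitive_one_ge hM0 (by linarith : 0 ≤ 1 - η)
    have hb := tanhPrimitive_one_ge hM0 h0.le
    have hc : (1 - η) / (2 * M) + η / (2 * M) ≤ 1 / 20 := by
      rw [← add_div, div_le_div_iff₀ (by positivity) (by norm_num)]
      nlinarith
    simp only [tanhMoment, tanhPrimitive_neg, pow_one, neg_one_mul, sub_neg_eq_add]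
    linarith
  have hT1 : 11 / 13 ≤ tanh (M * (1 - η)) := eleven_div_thirteen_le_tanh (by nlinarith)
  have hηK0 := mul_le_mul_of_nonneg_left hK0 h0.le
  rw [tanhAvgDeriv]
  -- below `η = 0.2` only `0 ≤ tanh (M * η)` is available, above it `2 ≤ M * η`
  rcases le_or_gt η 0.2 with hη | hη
  · nlinarith [tanh_nonneg (mul_nonneg hM0.le h0.le)]
  · nlinarith [eleven_div_thirteen_le_tanh (by nlinarith : 2 ≤ M * η)]

lemma neg_three_lt_tanhAvgDeriv2 (hM : 10 < M) (h0 : 1 / 2 < η) (h1 : η < 1) :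
    -3 < tanhAvgDeriv2 M η := by
  have hM0 : 0 < M := by linarith
  have hM' : M⁻¹ < 10⁻¹ := (inv_lt_inv₀ hM0 (by norm_num)).2 hM
  have hK0 : tanhMoment M 0 η ≤ 10⁻¹ := by
    have ha := tanhPrimitive_le M 0 (by linarith : 0 ≤ 1 - η)
    have hb := sub_inv_le_tanhPrimitive_zero hM0 (by linarith : 0 ≤ η)
    simp only [tanhMoment, tanhPrimitive_neg, pow_zero, one_mul]
    norm_num at ha
    linarith
  have hT1 := tanh_nonneg (mul_nonneg hM0.le (by linarith : 0 ≤ 1 - η))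
  have hS0 := mul_one_sub_tanh_sq_le hM0.le (by nlinarith : M ≤ 2 * (M * η))
  have hS1 := mul_nonneg hM0.le (sub_nonneg.2 (tanh_sq_lt_one (M * (1 - η))).le)
  rw [tanhAvgDeriv2]
  nlinarith

end estimates

section icelineTemp

variable {M : ℝ}

lemma hasDerivAt_icelineTemp (M η : ℝ) :
    HasDerivAt (icelineTemp M) ((181.79 * -(1.446 * η) - 82.32 * tanhAvgDeriv M η) / 4.94) η :=
  ((((hasDerivAt_s η).const_mul 181.79).sub ((hasDerivAt_tanhAvg M η).const_mul 82.32)).sub_const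
    184.936).div_const 4.94

lemma continuous_icelineTemp (M : ℝ) : Continuous (icelineTemp M) :=
  continuous_iff_continuousAt.2 fun η => (hasDerivAt_icelineTemp M η).continuousAt

lemma icelineTemp_zero_neg (hM : 10 < M) : icelineTemp M 0 < 0 := by
  have := one_half_lt_tanhAvg_zero hM
  norm_num [icelineTemp, s]
  linarith

lemma icelineTemp_half_pos (hM : 0 ≤ M) : 0 < icelineTemp M (1 / 2) := by
  have := tanhAvg_half_nonpos hM
  norm_num [icelineTemp, s]
  linarith

lemma icelineTemp_one_neg (M : ℝ) : icelineTemp M 1 < 0 := by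
  have := neg_one_le_tanhAvg M 1
  norm_num [icelineTemp, s]
  linarith

lemma strictMonoOn_icelineTemp (hM : 10 < M) : StrictMonoOn (icelineTemp M) (Icc 0 (1 / 2)) := by
  refine strictMonoOn_of_deriv_pos (convex_Icc _ _) (continuous_icelineTemp M).continuousOn
    fun η hη => ?_
  rw [interior_Icc] at hη
  rw [(hasDerivAt_icelineTemp M η).deriv]
  have := tanhAvgDeriv_lt hM hη.1 hη.2
  norm_num
  linarith [hη.1]

lemma strictConcaveOn_icelineTemp (hM : 10 < M) :
    StrictConcaveOn ℝ (Icc (1 / 2) 1) (icelineTemp M) := by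
  refine strictConcaveOn_of_deriv2_neg (convex_Icc _ _) (continuous_icelineTemp M).continuousOn
    fun η hη => ?_
  rw [interior_Icc] at hη
  have hderiv : deriv (icelineTemp M) = fun η => _ :=
    funext fun η => (hasDerivAt_icelineTemp M η).deriv
  have h2 : HasDerivAt (deriv (icelineTemp M))
      ((181.79 * -1.446 - 82.32 * tanhAvgDeriv2 M η) / 4.94) η := by
    rw [hderiv]
    exact ((((hasDerivAt_id η).const_mul 1.446).neg.const_mul 181.79).sub
      ((hasDerivAt_tanhAvgDeriv M η).const_mul 82.32)).div_const 4.94 |>.congr_deriv (by ring)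
  rw [Function.iterate_succ_apply, Function.iterate_one, h2.deriv]
  have := neg_three_lt_tanhAvgDeriv2 hM hη.1 hη.2
  norm_num
  linarith

end icelineTemp

/-- For M > 10 the iceline-temperature function h(η) = T*(η)(η) - T_c has exactly two
roots in the unit interval, positive strictly between them and negative outside. -/
theorem iceline_temperature_two_roots (M : ℝ) (hM : 10 < M) :
    ∃ η₁ η₂ : ℝ, 0 < η₁ ∧ η₁ < η₂ ∧ η₂ < 1 ∧
      Tstar M η₁ η₁ - Tc = 0 ∧ Tstar M η₂ η₂ - Tc = 0 ∧
      (∀ η : ℝ, η₁ < η → η < η₂ → 0 < Tstar M η η - Tc) ∧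
      (∀ η : ℝ, (0 ≤ η ∧ η < η₁) ∨ (η₂ < η ∧ η ≤ 1) → Tstar M η η - Tc < 0) := by
  have hEq : EqOn (icelineTemp M) (fun η => Tstar M η η - Tc) (Icc 0 1) :=
    fun η hη => (Tstar_diag_sub_Tc M hη).symm
  have hhalf : (1 / 2 : ℝ) ∈ Icc 0 1 := by norm_num
  refine exists_two_roots_of_strictMonoOn_of_strictConcaveOn (c := 1 / 2) (by norm_num)
    (by norm_num) ((continuous_icelineTemp M).continuousOn.congr hEq.symm)
    ((strictMonoOn_icelineTemp hM).congr (hEq.mono (Icc_subset_Icc_right (by norm_num))))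
    ((strictConcaveOn_icelineTemp hM).congr (hEq.mono (Icc_subset_Icc_left (by norm_num))))
    ?_ ?_ ?_
  · simpa only [← hEq (left_mem_Icc.2 zero_le_one)] using icelineTemp_zero_neg hM
  · simpa only [← hEq hhalf] using icelineTemp_half_pos (by linarith)
  · simpa only [← hEq (right_mem_Icc.2 zero_le_one)] using icelineTemp_one_neg M
end Budyko
end
end
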